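/- arXiv:2602.09502 — 2 statements merged into one kernel-verified Lean document; each statement's English description precedes it below -/
import Mathlib

section
/- Let d ≥ 1 and let K ⊆ [0,1]^d be convex and downward-closed with 0 ∈ K, with ‖y‖ ≤ R for all y ∈ K. Let L ≥ 1 be an integer, let v_1, …, v_L ∈ K, and define x_1 = 0 and x_{k+1} = x_k + (1/L)·v_k ⊙ (1 − x_k) for k = 1, …, L. Let f : ℝ^d → ℝ be continuous DR-submodular and nonnegative on X = [0,1]^d, differentiable on X with ‖∇f(x) − ∇f(y)‖ ≤ β‖x − y‖ for all x, y ∈ X. Then for every x ∈ X: f(x_{L+1}) ≥ (1/e)·f(x) + Σ_{k=1}^L (1/L)·(1 − 1/L)^{L−k} · ⟨∇f(x_k) ⊙ (1 − x_k), v_k − x⟩ − βR²/(2L). -/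
open MeasureTheory Finset

noncomputable section

/-- The unit cube `[0,1]^d` in `ℝ^d` (with Euclidean structure). -/
def cube (d : ℕ) : Set (EuclideanSpace ℝ (Fin d)) :=
  {x | ∀ i, x i ∈ Set.Icc (0 : ℝ) 1}

/-- Coordinatewise (Hadamard) product on `ℝ^d`. -/
def had {d : ℕ} (x y : EuclideanSpace ℝ (Fin d)) : EuclideanSpace ℝ (Fin d) :=
  WithLp.toLp 2 (fun i => x i * y i)

/-- The all-ones vector in `ℝ^d`. -/
def onesV (d : ℕ) : EuclideanSpace ℝ (Fin d) := WithLp.toLp 2 (fun _ => 1)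

/-- `K ⊆ ℝ^d` is downward closed (relative to the nonnegative orthant): together with any
`y ∈ K` it contains every `x` with `0 ≤ x ≤ y` coordinatewise. -/
def DownwardClosed (d : ℕ) (K : Set (EuclideanSpace ℝ (Fin d))) : Prop :=
  ∀ y ∈ K, ∀ x : EuclideanSpace ℝ (Fin d), (∀ i, 0 ≤ x i) → (∀ i, x i ≤ y i) → x ∈ K

/-- `f` is continuous DR-submodular on the unit cube `[0,1]^d`. -/
def DRSubmodularOn (d : ℕ) (f : EuclideanSpace ℝ (Fin d) → ℝ) : Prop :=
  ∀ x y : EuclideanSpace ℝ (Fin d), x ∈ cube d → y ∈ cube d → (∀ i, x i ≤ y i) →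
    ∀ (j : Fin d) (z : ℝ), 0 ≤ z →
      x + z • EuclideanSpace.single j (1 : ℝ) ∈ cube d →
      y + z • EuclideanSpace.single j (1 : ℝ) ∈ cube d →
      f (y + z • EuclideanSpace.single j (1 : ℝ)) - f y ≤
        f (x + z • EuclideanSpace.single j (1 : ℝ)) - f x

variable {d : ℕ}

lemma apply_add (a b : EuclideanSpace ℝ (Fin d)) (i : Fin d) : (a + b) i = a i + b i := rfl
lemma apply_smul (c : ℝ) (a : EuclideanSpace ℝ (Fin d)) (i : Fin d) : (c • a) i = c * a i := rfl
lemma apply_sub (a b : EuclideanSpace ℝ (Fin d)) (i : Fin d) : (a - b) i = a i - b i := rfl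

lemma mem_cube {p : EuclideanSpace ℝ (Fin d)} : p ∈ cube d ↔ ∀ i, 0 ≤ p i ∧ p i ≤ 1 := by
  simp [cube, Set.mem_Icc]

lemma seg_mem_cube {a w : EuclideanSpace ℝ (Fin d)} {T : ℝ}
    (ha : a ∈ cube d) (hw : ∀ i, 0 ≤ w i) (haT : a + T • w ∈ cube d)
    {t : ℝ} (ht0 : 0 ≤ t) (htT : t ≤ T) : a + t • w ∈ cube d := by
  rw [mem_cube] at *
  intro i
  have h1 := ha i; have h2 := haT i
  rw [apply_add, apply_smul] at h2 ⊢
  constructor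
  · nlinarith [hw i]
  · nlinarith [hw i]

/-- DR submodularity along a nonnegative direction. -/
lemma dr_dir {f : EuclideanSpace ℝ (Fin d) → ℝ} (hsub : DRSubmodularOn d f)
    {u u' w : EuclideanSpace ℝ (Fin d)} {z : ℝ}
    (hz : 0 ≤ z) (hw : ∀ i, 0 ≤ w i)
    (hu : u ∈ cube d) (hu' : u' ∈ cube d) (hle : ∀ i, u i ≤ u' i)
    (huz : u + z • w ∈ cube d) (hu'z : u' + z • w ∈ cube d) :
    f (u' + z • w) - f u' ≤ f (u + z • w) - f u := by
  set mask : Finset (Fin d) → EuclideanSpace ℝ (Fin d) :=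
    fun S => WithLp.toLp 2 (fun i => if i ∈ S then w i else 0) with hmask
  have maskmem : ∀ (S : Finset (Fin d)) (p : EuclideanSpace ℝ (Fin d)),
      p ∈ cube d → p + z • w ∈ cube d → p + z • mask S ∈ cube d := by
    intro S p hp hpz
    rw [mem_cube] at *
    intro i
    have h1 := hp i; have h2 := hpz i
    rw [apply_add, apply_smul] at h2 ⊢
    simp only [hmask]
    by_cases h : i ∈ S
    · rw [if_pos h]; exact ⟨by nlinarith [hw i], h2.2⟩
    · rw [if_neg h]; simpa using ⟨h1.1, h1.2⟩
  have key : ∀ S : Finset (Fin d),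
      f (u' + z • mask S) - f u' ≤ f (u + z • mask S) - f u := by
    intro S
    induction S using Finset.induction_on with
    | empty =>
      have : mask ∅ = 0 := by ext i; simp [hmask]
      simp [this]
    | @insert j S hj ih =>
      have hstep : ∀ p : EuclideanSpace ℝ (Fin d),
          p + z • mask (insert j S) =
            (p + z • mask S) + (z * w j) • EuclideanSpace.single j (1 : ℝ) := by
        intro p
        ext i
        rw [apply_add, apply_add, apply_add, apply_smul, apply_smul, apply_smul]
        rw [EuclideanSpace.single_apply]
        simp only [hmask]
        by_cases h : i = j
        · subst h; simp [hj]
        · simp [h, Finset.mem_insert]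
      have hcube1 := maskmem S u hu huz
      have hcube2 := maskmem S u' hu' hu'z
      have hcube3 := maskmem (insert j S) u hu huz
      have hcube4 := maskmem (insert j S) u' hu' hu'z
      rw [hstep u] at hcube3
      rw [hstep u'] at hcube4
      have hle2 : ∀ i, (u + z • mask S) i ≤ (u' + z • mask S) i := by
        intro i; rw [apply_add, apply_add, apply_smul]
        have := hle i; linarith
      have := hsub (u + z • mask S) (u' + z • mask S) hcube1 hcube2 hle2 j (z * w j)
        (mul_nonneg hz (hw j)) hcube3 hcube4
      rw [hstep u, hstep u']
      linarith
  have hmu : mask Finset.univ = w := by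
    ext i; simp [hmask]
  have := key Finset.univ
  rwa [hmu] at this
section Line

variable {f : EuclideanSpace ℝ (Fin d) → ℝ} {f' : EuclideanSpace ℝ (Fin d) → EuclideanSpace ℝ (Fin d)}
  {β : ℝ} {a w : EuclideanSpace ℝ (Fin d)} {T : ℝ}

/-- Derivative of `t ↦ f (a + t • w)` within `[0, T]`. -/
lemma hasDeriv_line (hgrad : ∀ y ∈ cube d, HasGradientWithinAt f (f' y) (cube d) y)
    (ha : a ∈ cube d) (hw : ∀ i, 0 ≤ w i) (haT : a + T • w ∈ cube d)
    {t : ℝ} (ht : t ∈ Set.Icc 0 T) :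
    HasDerivWithinAt (fun t : ℝ => f (a + t • w))
      (inner ℝ (f' (a + t • w)) w : ℝ) (Set.Icc 0 T) t := by
  have hmem : a + t • w ∈ cube d := seg_mem_cube ha hw haT ht.1 ht.2
  have hmaps : Set.MapsTo (fun s : ℝ => a + s • w) (Set.Icc 0 T) (cube d) :=
    fun s hs => seg_mem_cube ha hw haT hs.1 hs.2
  have hc : HasDerivWithinAt (fun s : ℝ => a + s • w) w (Set.Icc 0 T) t := by
    have h1 : HasDerivAt (fun s : ℝ => a + s • w) ((1:ℝ) • w) t :=
      ((hasDerivAt_id t).smul_const w).const_add a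
    simpa using h1.hasDerivWithinAt
  have hf : HasFDerivWithinAt f (InnerProductSpace.toDual ℝ _ (f' (a + t • w)))
      (cube d) (a + t • w) := hgrad _ hmem
  have := hf.comp_hasDerivWithinAt t hc hmaps
  simp only [InnerProductSpace.toDual_apply_apply] at this
  exact this

/-- The directional derivative function is continuous (Lipschitz). -/
lemma phi_cont (hgrad : ∀ y ∈ cube d, HasGradientWithinAt f (f' y) (cube d) y)
    (hlip : ∀ y ∈ cube d, ∀ y' ∈ cube d, ‖f' y - f' y'‖ ≤ β * ‖y - y'‖)
    (ha : a ∈ cube d) (hw : ∀ i, 0 ≤ w i) (haT : a + T • w ∈ cube d) :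
    ContinuousOn (fun t : ℝ => (inner ℝ (f' (a + t • w)) w : ℝ)) (Set.Icc 0 T) := by
  refine LipschitzOnWith.continuousOn (K := (β * ‖w‖ ^ 2).toNNReal) ?_
  refine LipschitzOnWith.of_dist_le_mul ?_
  intro s hs t ht
  have hms : a + s • w ∈ cube d := seg_mem_cube ha hw haT hs.1 hs.2
  have hmt : a + t • w ∈ cube d := seg_mem_cube ha hw haT ht.1 ht.2
  have h1 : dist (inner ℝ (f' (a + s • w)) w : ℝ) (inner ℝ (f' (a + t • w)) w : ℝ)
      = |(inner ℝ (f' (a + s • w) - f' (a + t • w)) w : ℝ)| := by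
    rw [Real.dist_eq, inner_sub_left]
  rw [h1]
  have h2 : |(inner ℝ (f' (a + s • w) - f' (a + t • w)) w : ℝ)| ≤
      ‖f' (a + s • w) - f' (a + t • w)‖ * ‖w‖ := abs_real_inner_le_norm _ _
  have h3 : ‖f' (a + s • w) - f' (a + t • w)‖ ≤ β * ‖(a + s • w) - (a + t • w)‖ :=
    hlip _ hms _ hmt
  have h4 : (a + s • w) - (a + t • w) = (s - t) • w := by
    rw [add_sub_add_left_eq_sub, ← sub_smul]
  have h5 : ‖(a + s • w) - (a + t • w)‖ = |s - t| * ‖w‖ := by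
    rw [h4, norm_smul]; simp
  have h6 : β * ‖w‖ ^ 2 ≤ ((β * ‖w‖ ^ 2).toNNReal : ℝ) := Real.le_coe_toNNReal _
  have hd : dist s t = |s - t| := Real.dist_eq s t
  have h0 : (0:ℝ) ≤ |s - t| := abs_nonneg _
  have h7 : ‖w‖ * ‖w‖ = ‖w‖ ^ 2 := (sq ‖w‖).symm
  calc |(inner ℝ (f' (a + s • w) - f' (a + t • w)) w : ℝ)|
      ≤ ‖f' (a + s • w) - f' (a + t • w)‖ * ‖w‖ := h2
    _ ≤ (β * (|s - t| * ‖w‖)) * ‖w‖ := by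
        rw [h5] at h3
        exact mul_le_mul_of_nonneg_right h3 (norm_nonneg w)
    _ = (β * ‖w‖ ^ 2) * |s - t| := by ring
    _ ≤ ((β * ‖w‖ ^ 2).toNNReal : ℝ) * dist s t := by
        rw [hd]; exact mul_le_mul_of_nonneg_right h6 h0

/-- Slopes from the right converge to the derivative. -/
lemma slope_tendsto (hgrad : ∀ y ∈ cube d, HasGradientWithinAt f (f' y) (cube d) y)
    (ha : a ∈ cube d) (hw : ∀ i, 0 ≤ w i) (haT : a + T • w ∈ cube d)
    {u : ℝ} (hu : u ∈ Set.Ico 0 T) :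
    Filter.Tendsto (fun z : ℝ => (f (a + (u + z) • w) - f (a + u • w)) / z)
      (nhdsWithin 0 (Set.Ioi 0)) (nhds (inner ℝ (f' (a + u • w)) w : ℝ)) := by
  have hder := hasDeriv_line hgrad ha hw haT (Set.mem_Icc.2 ⟨hu.1, hu.2.le⟩)
  have hslope := hasDerivWithinAt_iff_tendsto_slope.1 hder
  have hmap : Filter.Tendsto (fun z : ℝ => u + z) (nhdsWithin 0 (Set.Ioi 0))
      (nhdsWithin u (Set.Icc 0 T \ {u})) := by
    rw [tendsto_nhdsWithin_iff]
    constructor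
    · have : Filter.Tendsto (fun z : ℝ => u + z) (nhds 0) (nhds u) := by
        simpa using (continuous_add_left u).tendsto (0:ℝ)
      exact this.mono_left nhdsWithin_le_nhds
    · filter_upwards [Ioo_mem_nhdsGT_of_mem (Set.mem_Ico.2 ⟨le_refl 0, sub_pos.2 hu.2⟩)]
        with z hz
      refine ⟨⟨by linarith [hu.1, hz.1], by linarith [hz.2]⟩, ?_⟩
      simp only [Set.mem_singleton_iff]
      intro h
      have : z = 0 := by linarith [congrArg (· - u) h] 
      linarith [hz.1]
  have hcomp := hslope.comp hmap
  refine hcomp.congr' ?_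
  filter_upwards [self_mem_nhdsWithin] with z hz
  have hzne : z ≠ 0 := ne_of_gt hz
  simp only [Function.comp_apply, slope_def_field]
  rw [add_sub_cancel_left]

end Line
section Line2

variable {f : EuclideanSpace ℝ (Fin d) → ℝ} {f' : EuclideanSpace ℝ (Fin d) → EuclideanSpace ℝ (Fin d)}
  {β : ℝ} {a w : EuclideanSpace ℝ (Fin d)} {T : ℝ}

/-- The directional derivative is antitone along the line (on `[0,T)`). -/
lemma phi_anti (hsub : DRSubmodularOn d f)
    (hgrad : ∀ y ∈ cube d, HasGradientWithinAt f (f' y) (cube d) y)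
    (ha : a ∈ cube d) (hw : ∀ i, 0 ≤ w i) (haT : a + T • w ∈ cube d)
    {s t : ℝ} (hs : s ∈ Set.Ico 0 T) (ht : t ∈ Set.Ico 0 T) (hst : s ≤ t) :
    (inner ℝ (f' (a + t • w)) w : ℝ) ≤ (inner ℝ (f' (a + s • w)) w : ℝ) := by
  have hFs := slope_tendsto hgrad ha hw haT hs
  have hFt := slope_tendsto hgrad ha hw haT ht
  refine le_of_tendsto_of_tendsto hFt hFs ?_
  filter_upwards [Ioo_mem_nhdsGT_of_mem (Set.mem_Ico.2 ⟨le_refl 0, sub_pos.2 ht.2⟩)]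
    with z hz
  have hz0 : (0:ℝ) < z := hz.1
  have h1 : a + (t + z) • w = (a + t • w) + z • w := by rw [add_smul, add_assoc]
  have h2 : a + (s + z) • w = (a + s • w) + z • w := by rw [add_smul, add_assoc]
  have hmt : a + t • w ∈ cube d := seg_mem_cube ha hw haT ht.1 ht.2.le
  have hms : a + s • w ∈ cube d := seg_mem_cube ha hw haT hs.1 hs.2.le
  have hmtz : a + (t + z) • w ∈ cube d :=
    seg_mem_cube ha hw haT (by linarith [ht.1]) (by linarith [hz.2])
  have hmsz : a + (s + z) • w ∈ cube d :=
    seg_mem_cube ha hw haT (by linarith [hs.1]) (by linarith [hz.2])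
  have hle : ∀ i, (a + s • w) i ≤ (a + t • w) i := by
    intro i; simp only [apply_add, apply_smul]
    have := hw i; nlinarith
  have key := dr_dir hsub hz0.le hw hms hmt hle (h2 ▸ hmsz) (h1 ▸ hmtz)
  rw [← h1, ← h2] at key
  exact (div_le_div_iff_of_pos_right hz0).2 key

end Line2
section Line3

variable {f : EuclideanSpace ℝ (Fin d) → ℝ} {f' : EuclideanSpace ℝ (Fin d) → EuclideanSpace ℝ (Fin d)}
  {β : ℝ} {a w : EuclideanSpace ℝ (Fin d)} {T : ℝ}

lemma line_concave (hsub : DRSubmodularOn d f)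
    (hgrad : ∀ y ∈ cube d, HasGradientWithinAt f (f' y) (cube d) y)
    (ha : a ∈ cube d) (hw : ∀ i, 0 ≤ w i) (haT : a + T • w ∈ cube d) :
    ConcaveOn ℝ (Set.Icc 0 T) (fun t : ℝ => f (a + t • w)) := by
  have hderAt : ∀ t ∈ Set.Ioo (0:ℝ) T,
      HasDerivAt (fun t : ℝ => f (a + t • w)) (inner ℝ (f' (a + t • w)) w : ℝ) t := by
    intro t ht
    exact (hasDeriv_line hgrad ha hw haT (Set.mem_Icc.2 ⟨ht.1.le, ht.2.le⟩)).hasDerivAt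
      (Icc_mem_nhds ht.1 ht.2)
  refine AntitoneOn.concaveOn_of_deriv (convex_Icc 0 T) ?_ ?_ ?_
  · intro t ht
    exact (hasDeriv_line hgrad ha hw haT ht).continuousWithinAt
  · rw [interior_Icc]
    intro t ht
    exact (hderAt t ht).differentiableAt.differentiableWithinAt
  · rw [interior_Icc]
    intro s hs t ht hst
    rw [(hderAt s hs).deriv, (hderAt t ht).deriv]
    exact phi_anti hsub hgrad ha hw haT (Set.mem_Ico.2 ⟨hs.1.le, hs.2⟩)
      (Set.mem_Ico.2 ⟨ht.1.le, ht.2⟩) hst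

lemma line_ftc (hgrad : ∀ y ∈ cube d, HasGradientWithinAt f (f' y) (cube d) y)
    (hlip : ∀ y ∈ cube d, ∀ y' ∈ cube d, ‖f' y - f' y'‖ ≤ β * ‖y - y'‖)
    (ha : a ∈ cube d) (hw : ∀ i, 0 ≤ w i) (haT : a + (1:ℝ) • w ∈ cube d) :
    ∫ t in (0:ℝ)..1, (inner ℝ (f' (a + t • w)) w : ℝ) = f (a + w) - f a := by
  have h := intervalIntegral.integral_eq_sub_of_hasDeriv_right_of_le (f := fun t : ℝ => f (a + t • w))
    (f' := fun t : ℝ => (inner ℝ (f' (a + t • w)) w : ℝ)) zero_le_one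
    (fun t ht => (hasDeriv_line hgrad ha hw haT ht).continuousWithinAt)
    (fun t ht => ((hasDeriv_line hgrad ha hw haT
      (Set.mem_Icc.2 ⟨ht.1.le, ht.2.le⟩)).hasDerivAt
      (Icc_mem_nhds ht.1 ht.2)).hasDerivWithinAt)
    ((phi_cont hgrad hlip ha hw haT).intervalIntegrable_of_Icc zero_le_one)
  rw [h]
  simp

/-- Gradient upper bound on increments along nonnegative directions. -/
lemma grad_upper (hsub : DRSubmodularOn d f)
    (hgrad : ∀ y ∈ cube d, HasGradientWithinAt f (f' y) (cube d) y)
    (hlip : ∀ y ∈ cube d, ∀ y' ∈ cube d, ‖f' y - f' y'‖ ≤ β * ‖y - y'‖)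
    (ha : a ∈ cube d) (hw : ∀ i, 0 ≤ w i) (haw : a + w ∈ cube d) :
    f (a + w) - f a ≤ (inner ℝ (f' a) w : ℝ) := by
  have haT : a + (1:ℝ) • w ∈ cube d := by simpa using haw
  set φ : ℝ → ℝ := fun t => (inner ℝ (f' (a + t • w)) w : ℝ) with hφ
  have hbound : ∀ t ∈ Set.Icc (0:ℝ) 1, φ t ≤ φ 0 := by
    intro t ht
    rcases lt_or_eq_of_le ht.2 with h | h
    · exact phi_anti hsub hgrad ha hw haT (Set.mem_Ico.2 ⟨le_refl 0, one_pos⟩)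
        (Set.mem_Ico.2 ⟨ht.1, h⟩) ht.1
    · subst h
      have hcont : ContinuousWithinAt φ (Set.Ico (0:ℝ) 1) 1 :=
        ((phi_cont hgrad hlip ha hw haT) 1 (Set.mem_Icc.2 ⟨zero_le_one, le_refl 1⟩)).mono
          Set.Ico_subset_Icc_self
      have hne : (nhdsWithin (1:ℝ) (Set.Ico (0:ℝ) 1)).NeBot :=
        mem_closure_iff_nhdsWithin_neBot.1 (by
          rw [closure_Ico (zero_ne_one)]
          exact Set.mem_Icc.2 ⟨zero_le_one, le_refl 1⟩)
      refine le_of_tendsto hcont ?_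
      filter_upwards [self_mem_nhdsWithin] with z hz
      exact phi_anti hsub hgrad ha hw haT (Set.mem_Ico.2 ⟨le_refl 0, one_pos⟩)
        hz hz.1
  have hftc := line_ftc hgrad hlip ha hw haT
  have hint : IntervalIntegrable φ volume 0 1 :=
    (phi_cont hgrad hlip ha hw haT).intervalIntegrable_of_Icc zero_le_one
  have hmono := intervalIntegral.integral_mono_on zero_le_one hint
    (intervalIntegrable_const (c := φ 0)) hbound
  rw [hftc] at hmono
  have h1 : ∫ _ in (0:ℝ)..1, φ 0 = φ 0 := by simp
  rw [h1] at hmono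
  have h2 : φ 0 = (inner ℝ (f' a) w : ℝ) := by rw [hφ]; norm_num
  linarith

end Line3
section Line4

variable {f : EuclideanSpace ℝ (Fin d) → ℝ} {f' : EuclideanSpace ℝ (Fin d) → EuclideanSpace ℝ (Fin d)}
  {β : ℝ} {a w : EuclideanSpace ℝ (Fin d)}

/-- Descent lemma: smoothness lower bound for increments. -/
lemma descent (hgrad : ∀ y ∈ cube d, HasGradientWithinAt f (f' y) (cube d) y)
    (hlip : ∀ y ∈ cube d, ∀ y' ∈ cube d, ‖f' y - f' y'‖ ≤ β * ‖y - y'‖)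
    (ha : a ∈ cube d) (hw : ∀ i, 0 ≤ w i) (haw : a + w ∈ cube d) :
    f a + (inner ℝ (f' a) w : ℝ) - β / 2 * ‖w‖ ^ 2 ≤ f (a + w) := by
  have haT : a + (1:ℝ) • w ∈ cube d := by simpa using haw
  set φ : ℝ → ℝ := fun t => (inner ℝ (f' (a + t • w)) w : ℝ) with hφ
  have h2 : φ 0 = (inner ℝ (f' a) w : ℝ) := by rw [hφ]; norm_num
  have hbound : ∀ t ∈ Set.Icc (0:ℝ) 1, φ 0 - β * ‖w‖ ^ 2 * t ≤ φ t := by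
    intro t ht
    have hmt : a + t • w ∈ cube d := seg_mem_cube ha hw haT ht.1 ht.2
    have hd : |φ 0 - φ t| ≤ β * ‖w‖ ^ 2 * t := by
      have e1 : φ 0 - φ t = (inner ℝ (f' a - f' (a + t • w)) w : ℝ) := by
        rw [inner_sub_left, h2]
      rw [e1]
      have e2 : |(inner ℝ (f' a - f' (a + t • w)) w : ℝ)| ≤
          ‖f' a - f' (a + t • w)‖ * ‖w‖ := abs_real_inner_le_norm _ _
      have e3 : ‖f' a - f' (a + t • w)‖ ≤ β * ‖a - (a + t • w)‖ := hlip _ ha _ hmt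
      have e4 : ‖a - (a + t • w)‖ = t * ‖w‖ := by
        have : a - (a + t • w) = (-t) • w := by
          ext i
          simp only [apply_sub, apply_add, apply_smul]
          ring
        rw [this, norm_smul]
        simp [abs_of_nonneg ht.1]
      calc |(inner ℝ (f' a - f' (a + t • w)) w : ℝ)|
          ≤ ‖f' a - f' (a + t • w)‖ * ‖w‖ := e2
        _ ≤ (β * (t * ‖w‖)) * ‖w‖ := by
            rw [e4] at e3
            exact mul_le_mul_of_nonneg_right e3 (norm_nonneg w)
        _ = β * ‖w‖ ^ 2 * t := by ring
    have := abs_le.1 hd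
    linarith [this.2]
  have hftc := line_ftc hgrad hlip ha hw haT
  have hint : IntervalIntegrable φ volume 0 1 :=
    (phi_cont hgrad hlip ha hw haT).intervalIntegrable_of_Icc zero_le_one
  have e1 : IntervalIntegrable (fun t : ℝ => β * ‖w‖ ^ 2 * t) volume 0 1 :=
    (continuous_const.mul continuous_id).intervalIntegrable 0 1
  have hint2 : IntervalIntegrable (fun t : ℝ => φ 0 - β * ‖w‖ ^ 2 * t) volume 0 1 :=
    intervalIntegrable_const.sub e1
  have hmono := intervalIntegral.integral_mono_on zero_le_one hint2 hint hbound
  rw [hftc] at hmono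
  have h3 : ∫ t in (0:ℝ)..1, (φ 0 - β * ‖w‖ ^ 2 * t) = φ 0 - β * ‖w‖ ^ 2 / 2 := by
    rw [intervalIntegral.integral_sub intervalIntegrable_const e1,
        intervalIntegral.integral_const_mul]
    simp [integral_id]
    ring
  rw [h3] at hmono
  have hww : a + (1:ℝ) • w = a + w := by simp
  rw [h2] at hmono
  linarith

/-- `f(y + x ⊙ (1-y)) ≥ (1-m) f(y)` when all coordinates of `x` are at most `m < 1`. -/
lemma or_bound (hsub : DRSubmodularOn d f)
    (hgrad : ∀ y ∈ cube d, HasGradientWithinAt f (f' y) (cube d) y)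
    (hnonneg : ∀ y ∈ cube d, 0 ≤ f y)
    {xb y : EuclideanSpace ℝ (Fin d)} (hxb : xb ∈ cube d) (hy : y ∈ cube d)
    {m : ℝ} (hm0 : 0 ≤ m) (hm1 : m < 1) (hxm : ∀ i, xb i ≤ m) :
    (1 - m) * f y ≤ f (y + had xb (onesV d - y)) := by
  set w : EuclideanSpace ℝ (Fin d) := had xb (onesV d - y) with hwdef
  have hw : ∀ i, 0 ≤ w i := by
    intro i
    have h1 := (mem_cube.1 hxb) i
    have h2 := (mem_cube.1 hy) i
    have : w i = xb i * (1 - y i) := rfl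
    rw [this]
    nlinarith
  rcases eq_or_lt_of_le hm0 with h | h
  · -- m = 0 : then xb = 0 and w = 0
    have hxb0 : ∀ i, xb i = 0 := by
      intro i
      have h1 := (mem_cube.1 hxb) i
      have := hxm i
      rw [← h] at this
      linarith
    have hw0 : w = 0 := by
      ext i
      show xb i * (1 - y i) = 0
      rw [hxb0 i]; ring
    rw [hw0, ← h]
    simp
  · -- m > 0
    set T : ℝ := 1 / m with hT
    have hT1 : 1 ≤ T := by rw [hT]; rw [le_div_iff₀ h]; linarith
    have haT : y + T • w ∈ cube d := by
      rw [mem_cube]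
      intro i
      have h1 := (mem_cube.1 hxb) i
      have h2 := (mem_cube.1 hy) i
      have hwi : w i = xb i * (1 - y i) := rfl
      rw [apply_add, apply_smul, hwi]
      constructor
      · nlinarith [hw i, le_trans zero_le_one hT1]
      · have hxi : xb i / m ≤ 1 := by
          rw [div_le_one h]; exact hxm i
        have : T * (xb i * (1 - y i)) = (xb i / m) * (1 - y i) := by
          rw [hT]; field_simp
        rw [this]
        nlinarith
    have hconc := line_concave hsub hgrad hy hw haT
    have hmem0 : (0:ℝ) ∈ Set.Icc (0:ℝ) T := Set.mem_Icc.2 ⟨le_refl 0, by linarith⟩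
    have hmemT : T ∈ Set.Icc (0:ℝ) T := Set.mem_Icc.2 ⟨by linarith, le_refl T⟩
    have hcomb := hconc.2 hmem0 hmemT (by linarith : (0:ℝ) ≤ 1 - m) hm0
      (by ring : (1 - m) + m = 1)
    have hpt : (1 - m) • (0:ℝ) + m • T = 1 := by
      rw [hT]; simp only [smul_eq_mul]; field_simp; ring
    rw [hpt] at hcomb
    have hgT : 0 ≤ f (y + T • w) := hnonneg _ haT
    have hg0 : y + (0:ℝ) • w = y := by simp
    have hg1 : y + (1:ℝ) • w = y + w := by simp
    simp only [hg0, hg1] at hcomb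
    have : (1 - m) • f y + m • f (y + T • w) ≥ (1 - m) * f y := by
      simp only [smul_eq_mul]
      nlinarith
    calc (1 - m) * f y ≤ (1 - m) • f y + m • f (y + T • w) := this
      _ ≤ f (y + w) := hcomb

end Line4
section Utils

lemma inner_eq_sum (u v : EuclideanSpace ℝ (Fin d)) :
    (inner ℝ u v : ℝ) = ∑ i, u i * v i := by
  simp [PiLp.inner_apply, RCLike.inner_apply]
  exact Finset.sum_congr rfl (fun i _ => mul_comm _ _)

lemma inner_had_swap (u r s : EuclideanSpace ℝ (Fin d)) :
    (inner ℝ (had u r) s : ℝ) = (inner ℝ u (had s r) : ℝ) := by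
  rw [inner_eq_sum, inner_eq_sum]
  apply Finset.sum_congr rfl
  intro i _
  show u i * r i * s i = u i * (s i * r i)
  ring

lemma norm_had_le (u r : EuclideanSpace ℝ (Fin d)) (hr : ∀ i, |r i| ≤ 1) :
    ‖had u r‖ ≤ ‖u‖ := by
  rw [EuclideanSpace.norm_eq, EuclideanSpace.norm_eq]
  apply Real.sqrt_le_sqrt
  apply Finset.sum_le_sum
  intro i _
  have h1 : ‖had u r i‖ = |u i * r i| := Real.norm_eq_abs _
  have h2 : ‖u i‖ = |u i| := Real.norm_eq_abs _
  rw [h1, h2, abs_mul, mul_pow]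
  have := hr i
  have h3 := abs_nonneg (u i)
  have h4 := abs_nonneg (r i)
  have h5 : |r i|^2 ≤ 1 := by nlinarith
  nlinarith [sq_nonneg (|u i|)]

lemma pow_ge_exp_neg_one (L : ℕ) (hL : 1 ≤ L) :
    Real.exp (-1) ≤ (1 - 1/(L:ℝ)) ^ (L - 1) := by
  rcases eq_or_lt_of_le hL with h | h
  · rw [← h]
    norm_num [Real.exp_le_one_iff]
  · have hL2 : 2 ≤ L := h
    have hL2' : (2:ℝ) ≤ (L:ℝ) := by exact_mod_cast hL2
    have hc : (0:ℝ) < 1 - 1/(L:ℝ) := by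
      have : 1/(L:ℝ) ≤ 1/2 := by
        apply one_div_le_one_div_of_le <;> linarith
      linarith
    have hL1 : (0:ℝ) < (L:ℝ) - 1 := by linarith
    have hlog : Real.log ((L:ℝ)/((L:ℝ)-1)) ≤ 1/((L:ℝ)-1) := by
      have h1 : (0:ℝ) < (L:ℝ)/((L:ℝ)-1) := by positivity
      have := Real.log_le_sub_one_of_pos h1
      have h2 : (L:ℝ)/((L:ℝ)-1) - 1 = 1/((L:ℝ)-1) := by field_simp; ring
      linarith
    have hlog2 : -1 ≤ ((L:ℝ)-1) * Real.log (1 - 1/(L:ℝ)) := by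
      have h1 : Real.log (1 - 1/(L:ℝ)) = - Real.log ((L:ℝ)/((L:ℝ)-1)) := by
        rw [← Real.log_inv]
        congr 1
        field_simp
      rw [h1]
      have := mul_le_mul_of_nonneg_left hlog (le_of_lt hL1)
      have h3 : ((L:ℝ)-1) * (1/((L:ℝ)-1)) = 1 := by field_simp
      nlinarith
    have hcast : ((L - 1 : ℕ) : ℝ) = (L:ℝ) - 1 := by
      have := Nat.cast_sub hL (R := ℝ)
      simpa using this
    calc Real.exp (-1) ≤ Real.exp (((L:ℝ)-1) * Real.log (1 - 1/(L:ℝ))) :=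
          Real.exp_le_exp.2 hlog2
      _ = (1 - 1/(L:ℝ)) ^ (L - 1) := by
          rw [← hcast, Real.exp_nat_mul, Real.exp_log hc]

end Utils
lemma onesV_sub_apply (a : EuclideanSpace ℝ (Fin d)) (i : Fin d) :
    (onesV d - a) i = 1 - a i := rfl

lemma had_apply' (u r : EuclideanSpace ℝ (Fin d)) (i : Fin d) :
    had u r i = u i * r i := rfl

section Step

variable {f : EuclideanSpace ℝ (Fin d) → ℝ} {f' : EuclideanSpace ℝ (Fin d) → EuclideanSpace ℝ (Fin d)}
  {β : ℝ}

lemma step_ineq (hsub : DRSubmodularOn d f)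
    (hgrad : ∀ y ∈ cube d, HasGradientWithinAt f (f' y) (cube d) y)
    (hlip : ∀ y ∈ cube d, ∀ y' ∈ cube d, ‖f' y - f' y'‖ ≤ β * ‖y - y'‖)
    (hnonneg : ∀ y ∈ cube d, 0 ≤ f y) (hβ : 0 ≤ β)
    {y : EuclideanSpace ℝ (Fin d)} (hy : y ∈ cube d)
    {a vk : EuclideanSpace ℝ (Fin d)} (ha : a ∈ cube d) (hvk : vk ∈ cube d)
    {q : ℝ} (hq0 : 0 < q) (hq1 : q ≤ 1) (hbd : ∀ i, a i ≤ 1 - q)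
    {L : ℕ} (hL : 1 ≤ L) {R : ℝ} (hvR : ‖vk‖ ≤ R)
    (hmem1 : a + (L:ℝ)⁻¹ • had vk (onesV d - a) ∈ cube d) :
    (1 - (L:ℝ)⁻¹) * f a + (L:ℝ)⁻¹ * (q * f y)
      + (L:ℝ)⁻¹ * (inner ℝ (had (f' a) (onesV d - a)) (vk - y) : ℝ)
      - β * R^2 / (2*(L:ℝ)^2)
      ≤ f (a + (L:ℝ)⁻¹ • had vk (onesV d - a)) := by
  have hLpos : (0:ℝ) < (L:ℝ) := by exact_mod_cast Nat.lt_of_lt_of_le Nat.zero_lt_one hL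
  have hLinv0 : (0:ℝ) ≤ (L:ℝ)⁻¹ := by positivity
  have hR0 : (0:ℝ) ≤ R := le_trans (norm_nonneg _) hvR
  -- the update direction
  have hw0 : ∀ i, 0 ≤ ((L:ℝ)⁻¹ • had vk (onesV d - a)) i := by
    intro i
    have e : ((L:ℝ)⁻¹ • had vk (onesV d - a)) i = (L:ℝ)⁻¹ * (vk i * (1 - a i)) := rfl
    rw [e]
    obtain ⟨hv0, hv1⟩ := mem_cube.1 hvk i
    obtain ⟨hx0, hx1⟩ := mem_cube.1 ha i
    exact mul_nonneg hLinv0 (mul_nonneg hv0 (by linarith))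
  have hdes := descent hgrad hlip ha hw0 hmem1
  -- norm bound
  have hnw2 : β / 2 * ‖(L:ℝ)⁻¹ • had vk (onesV d - a)‖^2 ≤ β * R^2 / (2*(L:ℝ)^2) := by
    have h1 : ‖had vk (onesV d - a)‖ ≤ ‖vk‖ := by
      apply norm_had_le
      intro i
      obtain ⟨hx0, hx1⟩ := mem_cube.1 ha i
      rw [onesV_sub_apply, abs_le]
      constructor <;> linarith
    have hnw : ‖(L:ℝ)⁻¹ • had vk (onesV d - a)‖ ≤ R / L := by
      rw [norm_smul]
      have h3 : ‖(L:ℝ)⁻¹‖ = (L:ℝ)⁻¹ := abs_of_nonneg hLinv0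
      rw [h3, div_eq_inv_mul]
      exact mul_le_mul_of_nonneg_left (le_trans h1 hvR) hLinv0
    have h4 : ‖(L:ℝ)⁻¹ • had vk (onesV d - a)‖^2 ≤ (R/L)^2 :=
      pow_le_pow_left₀ (norm_nonneg _) hnw 2
    have h5 : (R/(L:ℝ))^2 = R^2/(L:ℝ)^2 := div_pow R L 2
    calc β/2 * ‖(L:ℝ)⁻¹ • had vk (onesV d - a)‖^2
        ≤ β/2 * (R/L)^2 := mul_le_mul_of_nonneg_left h4 (by linarith)
      _ = β * R^2 / (2*(L:ℝ)^2) := by rw [h5]; ring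
  -- inner product identity
  have hinner : (inner ℝ (f' a) ((L:ℝ)⁻¹ • had vk (onesV d - a)) : ℝ) =
      (L:ℝ)⁻¹ * ((inner ℝ (had (f' a) (onesV d - a)) (vk - y) : ℝ)
        + (inner ℝ (f' a) (had y (onesV d - a)) : ℝ)) := by
    rw [real_inner_smul_right]
    congr 1
    rw [inner_sub_right]
    have e1 : (inner ℝ (had (f' a) (onesV d - a)) vk : ℝ)
        = (inner ℝ (f' a) (had vk (onesV d - a)) : ℝ) := inner_had_swap _ _ _
    have e2 : (inner ℝ (had (f' a) (onesV d - a)) y : ℝ)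
        = (inner ℝ (f' a) (had y (onesV d - a)) : ℝ) := inner_had_swap _ _ _
    rw [e1, e2]
    ring
  -- gradient upper bound for the ideal direction
  have hyw : ∀ i, 0 ≤ (had y (onesV d - a)) i := by
    intro i
    obtain ⟨hy0, hy1⟩ := mem_cube.1 hy i
    obtain ⟨hx0, hx1⟩ := mem_cube.1 ha i
    rw [had_apply', onesV_sub_apply]
    exact mul_nonneg hy0 (by linarith)
  have hayw : a + had y (onesV d - a) ∈ cube d := by
    rw [mem_cube]
    intro i
    obtain ⟨hy0, hy1⟩ := mem_cube.1 hy i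
    obtain ⟨hx0, hx1⟩ := mem_cube.1 ha i
    have e : (a + had y (onesV d - a)) i = a i + y i * (1 - a i) := rfl
    rw [e]
    constructor
    · nlinarith
    · nlinarith
  have hgu := grad_upper hsub hgrad hlip ha hyw hayw
  -- or bound
  have hob := or_bound hsub hgrad hnonneg ha hy (m := 1 - q) (by linarith) (by linarith) hbd
  have hsym : a + had y (onesV d - a) = y + had a (onesV d - y) := by
    ext i
    have e1 : (a + had y (onesV d - a)) i = a i + y i * (1 - a i) := rfl
    have e2 : (y + had a (onesV d - y)) i = y i + a i * (1 - y i) := rfl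
    rw [e1, e2]
    ring
  rw [← hsym] at hob
  have hob' : q * f y ≤ f (a + had y (onesV d - a)) := by
    have : 1 - (1 - q) = q := by ring
    rwa [this] at hob
  -- combine
  have hcomb : q * f y - f a ≤ (inner ℝ (f' a) (had y (onesV d - a)) : ℝ) := by linarith
  have hfinal := mul_le_mul_of_nonneg_left hcomb hLinv0
  rw [hinner] at hdes
  nlinarith [hdes, hnw2, hfinal]

end Step

set_option maxHeartbeats 1000000 in
/-- Lemma on the convergence of the Meta-Frank-Wolfe iterations:
for a continuous DR-submodular, nonnegative, `β`-smooth `f` on `[0,1]^d` and the iterates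
`x_1 = 0`, `x_{k+1} = x_k + (1/L) v_k ⊙ (1 - x_k)` with `v_k ∈ K`,
`f(x_{L+1}) ≥ (1/e) f(x) + Σ_{k=1}^L (1/L)(1-1/L)^{L-k} ⟨∇f(x_k) ⊙ (1-x_k), v_k - x⟩ - βR²/(2L)`. -/
theorem meta_frank_wolfe_convergence
    (d : ℕ) (hd : 1 ≤ d)
    (K : Set (EuclideanSpace ℝ (Fin d))) (hKcvx : Convex ℝ K) (hKX : K ⊆ cube d)
    (h0K : (0 : EuclideanSpace ℝ (Fin d)) ∈ K) (hdc : DownwardClosed d K)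
    (R : ℝ) (hR : ∀ y ∈ K, ‖y‖ ≤ R)
    (L : ℕ) (hL : 1 ≤ L)
    (v : ℕ → EuclideanSpace ℝ (Fin d)) (hv : ∀ k, 1 ≤ k → k ≤ L → v k ∈ K)
    (x : ℕ → EuclideanSpace ℝ (Fin d))
    (hx1 : x 1 = 0)
    (hrec : ∀ k, 1 ≤ k → k ≤ L →
      x (k + 1) = x k + (L : ℝ)⁻¹ • had (v k) (onesV d - x k))
    (β : ℝ)
    (f : EuclideanSpace ℝ (Fin d) → ℝ)
    (f' : EuclideanSpace ℝ (Fin d) → EuclideanSpace ℝ (Fin d))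
    (hsub : DRSubmodularOn d f)
    (hnonneg : ∀ y ∈ cube d, 0 ≤ f y)
    (hgrad : ∀ y ∈ cube d, HasGradientWithinAt f (f' y) (cube d) y)
    (hlip : ∀ y ∈ cube d, ∀ y' ∈ cube d, ‖f' y - f' y'‖ ≤ β * ‖y - y'‖) :
    ∀ y ∈ cube d,
      (1 / Real.exp 1) * f y +
          (∑ k ∈ Finset.Icc 1 L, (1 / (L : ℝ)) * (1 - 1 / (L : ℝ)) ^ (L - k) *
            (inner ℝ (had (f' (x k)) (onesV d - x k)) (v k - y) : ℝ)) -
          β * R ^ 2 / (2 * L) ≤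
        f (x (L + 1)) := by
  intro y hy
  have hcube0 : (0 : EuclideanSpace ℝ (Fin d)) ∈ cube d := by
    rw [mem_cube]; intro i
    constructor
    · exact le_refl 0
    · exact zero_le_one
  have hLpos : (0:ℝ) < (L:ℝ) := by exact_mod_cast Nat.lt_of_lt_of_le Nat.zero_lt_one hL
  have hLinv0 : (0:ℝ) ≤ (L:ℝ)⁻¹ := by positivity
  have hLinv1 : (L:ℝ)⁻¹ ≤ 1 := by
    rw [inv_le_one_iff₀]
    right; exact_mod_cast hL
  have hc0 : (0:ℝ) ≤ 1 - 1/(L:ℝ) := by rw [one_div]; linarith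
  have hc1 : (1:ℝ) - 1/(L:ℝ) ≤ 1 := by
    have : (0:ℝ) ≤ 1/(L:ℝ) := by positivity
    linarith
  -- β is nonnegative
  have hβ : 0 ≤ β := by
    have hs : (EuclideanSpace.single (⟨0, hd⟩ : Fin d) (1:ℝ)) ∈ cube d := by
      rw [mem_cube]; intro i
      rw [EuclideanSpace.single_apply]
      by_cases h : i = (⟨0, hd⟩ : Fin d) <;> simp [h]
    have h1 := hlip _ hcube0 _ hs
    have h2 : ‖(0 : EuclideanSpace ℝ (Fin d)) - EuclideanSpace.single (⟨0, hd⟩ : Fin d) (1:ℝ)‖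
        = 1 := by
      rw [zero_sub, norm_neg, EuclideanSpace.norm_single]
      norm_num
    rw [h2, mul_one] at h1
    exact le_trans (norm_nonneg _) h1
  have hR0 : (0:ℝ) ≤ R := by
    have := hR 0 h0K
    simpa using this
  have hE0 : (0:ℝ) ≤ β * R^2 / (2*(L:ℝ)^2) := by positivity
  -- coordinates of the iterates
  have coordx : ∀ k, 1 ≤ k → k ≤ L → ∀ i,
      x (k+1) i = x k i + (L:ℝ)⁻¹ * (v k i * (1 - x k i)) := by
    intro k h1 h2 i
    rw [hrec k h1 h2]
    rfl
  have hvc : ∀ k, 1 ≤ k → k ≤ L → ∀ i, 0 ≤ v k i ∧ v k i ≤ 1 :=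
    fun k h1 h2 i => mem_cube.1 (hKX (hv k h1 h2)) i
  -- invariant
  have inv : ∀ k, 1 ≤ k → k ≤ L + 1 →
      x k ∈ cube d ∧ ∀ i, x k i ≤ 1 - (1 - 1/(L:ℝ)) ^ (k-1) := by
    intro k hk
    induction k, hk using Nat.le_induction with
    | base =>
      intro _
      rw [hx1]
      refine ⟨hcube0, ?_⟩
      intro i
      simp
    | succ k hk ih =>
      intro hk1
      have hkL : k ≤ L := by omega
      obtain ⟨hmem, hbd⟩ := ih (by omega)
      constructor
      · rw [mem_cube]
        intro i
        rw [coordx k hk hkL i]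
        obtain ⟨hv0, hv1⟩ := hvc k hk hkL i
        obtain ⟨hx0, hx1'⟩ := mem_cube.1 hmem i
        constructor
        · have := mul_nonneg hLinv0 (mul_nonneg hv0 (by linarith : (0:ℝ) ≤ 1 - x k i))
          linarith
        · have key : 0 ≤ (1 - (L:ℝ)⁻¹ * v k i) * (1 - x k i) := by
            apply mul_nonneg
            · nlinarith
            · linarith
          nlinarith
      · intro i
        rw [coordx k hk hkL i]
        obtain ⟨hv0, hv1⟩ := hvc k hk hkL i
        obtain ⟨hx0, hx1'⟩ := mem_cube.1 hmem i
        have hbdi := hbd i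
        have hq0 : (0:ℝ) ≤ (1 - 1/(L:ℝ)) ^ (k-1) := pow_nonneg hc0 _
        have hkk : k - 1 + 1 = k := Nat.succ_pred_eq_of_pos hk
        have hpow : (1 - 1/(L:ℝ)) ^ (k+1-1) = (1 - 1/(L:ℝ)) ^ (k-1) * (1 - 1/(L:ℝ)) := by
          rw [Nat.add_sub_cancel]
          conv_lhs => rw [← hkk]
          rw [pow_succ]
        rw [hpow]
        have hinvL : (L:ℝ)⁻¹ = 1 - (1 - 1/(L:ℝ)) := by rw [one_div]; ring
        have key1 : 0 ≤ ((L:ℝ)⁻¹) * ((1 - x k i) * (1 - v k i)) :=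
          mul_nonneg hLinv0 (mul_nonneg (by linarith) (by linarith))
        have key2 : 0 ≤ (1 - 1/(L:ℝ)) * ((1 - x k i) - (1 - 1/(L:ℝ)) ^ (k-1)) :=
          mul_nonneg hc0 (by linarith)
        nlinarith [key1, key2]
  -- positivity of the contraction factor along the run
  have hqpos : ∀ k, 1 ≤ k → k ≤ L → (0:ℝ) < (1 - 1/(L:ℝ)) ^ (k-1) := by
    intro k hk hkL
    rcases eq_or_lt_of_le hk with h | h
    · rw [← h]; norm_num
    · have hL2 : 2 ≤ L := by omega
      have hL2' : (2:ℝ) ≤ (L:ℝ) := by exact_mod_cast hL2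
      have : (0:ℝ) < 1 - 1/(L:ℝ) := by
        have : 1/(L:ℝ) ≤ 1/2 := by
          apply one_div_le_one_div_of_le <;> linarith
        linarith
      positivity
  -- main induction
  have main : ∀ n : ℕ, n ≤ L →
      (∑ j ∈ Finset.Icc 1 n, (1/(L:ℝ)) * (1 - 1/(L:ℝ)) ^ (n-j) *
          ((1 - 1/(L:ℝ)) ^ (j-1) * f y
            + (inner ℝ (had (f' (x j)) (onesV d - x j)) (v j - y) : ℝ)))
        - n * (β * R^2 / (2*(L:ℝ)^2)) ≤ f (x (n+1)) := by
    intro n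
    induction n with
    | zero =>
      intro _
      simp only [Finset.Icc_eq_empty_of_lt Nat.zero_lt_one, Finset.sum_empty,
        Nat.cast_zero, zero_mul, sub_zero]
      rw [hx1]
      exact hnonneg _ hcube0
    | succ n ih =>
      intro hn1
      have hnL : n ≤ L := by omega
      have ihn := ih hnL
      have hk1 : 1 ≤ n + 1 := by omega
      obtain ⟨hmem, hbd⟩ := inv (n+1) hk1 (by omega)
      obtain ⟨hmem2, _⟩ := inv (n+2) (by omega) (by omega)
      have hmem2' : x (n+1) + (L:ℝ)⁻¹ • had (v (n+1)) (onesV d - x (n+1)) ∈ cube d := by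
        rw [← hrec (n+1) hk1 (by omega)]
        exact hmem2
      have hq0 := hqpos (n+1) hk1 (by omega)
      have hq1 : (1 - 1/(L:ℝ)) ^ (n+1-1) ≤ 1 := pow_le_one₀ hc0 hc1
      have hstep := step_ineq hsub hgrad hlip hnonneg hβ hy hmem
        (hKX (hv (n+1) hk1 (by omega))) hq0 hq1 hbd hL
        (hR _ (hv (n+1) hk1 (by omega))) hmem2'
      rw [← hrec (n+1) hk1 (by omega)] at hstep
      have hne : n + 1 - 1 = n := by omega
      rw [hne] at hstep
      rw [one_div] at hstep
      -- hstep : (1 - L⁻¹) f(x(n+1)) + L⁻¹ ((1-L⁻¹)^n f y) + L⁻¹ ⟪..⟫ - E ≤ f (x (n+1+1))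
      have hsplit : (∑ j ∈ Finset.Icc 1 (n+1), (1/(L:ℝ)) * (1 - 1/(L:ℝ)) ^ (n+1-j) *
          ((1 - 1/(L:ℝ)) ^ (j-1) * f y
            + (inner ℝ (had (f' (x j)) (onesV d - x j)) (v j - y) : ℝ)))
          = (1 - 1/(L:ℝ)) * (∑ j ∈ Finset.Icc 1 n, (1/(L:ℝ)) * (1 - 1/(L:ℝ)) ^ (n-j) *
              ((1 - 1/(L:ℝ)) ^ (j-1) * f y
                + (inner ℝ (had (f' (x j)) (onesV d - x j)) (v j - y) : ℝ)))
            + (1/(L:ℝ)) * ((1 - 1/(L:ℝ)) ^ n * f y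
                + (inner ℝ (had (f' (x (n+1))) (onesV d - x (n+1))) (v (n+1) - y) : ℝ)) := by
        rw [← Finset.insert_Icc_right_eq_Icc_add_one (by omega : 1 ≤ n + 1)]
        rw [Finset.sum_insert (by simp)]
        rw [Finset.mul_sum]
        rw [add_comm]
        congr 1
        · apply Finset.sum_congr rfl
          intro j hj
          have hj' := Finset.mem_Icc.1 hj
          have he : n + 1 - j = (n - j) + 1 := by omega
          rw [he, pow_succ]
          ring
        · have h1 : n + 1 - (n + 1) = 0 := by omega
          rw [h1, hne, pow_zero]
          ring
      rw [hsplit]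
      have hn0 : (0:ℝ) ≤ (n:ℝ) := Nat.cast_nonneg n
      have hcE : (1 - 1/(L:ℝ)) * ((n:ℝ) * (β * R^2 / (2*(L:ℝ)^2)))
          ≤ (n:ℝ) * (β * R^2 / (2*(L:ℝ)^2)) := by
        nlinarith [mul_nonneg hn0 hE0]
      have hS := mul_le_mul_of_nonneg_left (by linarith [ihn] :
          (∑ j ∈ Finset.Icc 1 n, (1/(L:ℝ)) * (1 - 1/(L:ℝ)) ^ (n-j) *
            ((1 - 1/(L:ℝ)) ^ (j-1) * f y
              + (inner ℝ (had (f' (x j)) (onesV d - x j)) (v j - y) : ℝ)))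
          ≤ f (x (n+1)) + (n:ℝ) * (β * R^2 / (2*(L:ℝ)^2))) hc0
      have hS2 : (1 - 1/(L:ℝ)) * (∑ j ∈ Finset.Icc 1 n, (1/(L:ℝ)) * (1 - 1/(L:ℝ)) ^ (n-j) *
            ((1 - 1/(L:ℝ)) ^ (j-1) * f y
              + (inner ℝ (had (f' (x j)) (onesV d - x j)) (v j - y) : ℝ)))
          ≤ (1 - 1/(L:ℝ)) * f (x (n+1)) + (n:ℝ) * (β * R^2 / (2*(L:ℝ)^2)) := by
        have hexpand : (1 - 1/(L:ℝ)) * (f (x (n+1)) + (n:ℝ) * (β * R^2 / (2*(L:ℝ)^2)))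
            = (1 - 1/(L:ℝ)) * f (x (n+1))
              + (1 - 1/(L:ℝ)) * ((n:ℝ) * (β * R^2 / (2*(L:ℝ)^2))) := by ring
        rw [hexpand] at hS
        linarith [hS, hcE]
      have hcast : ((n+1 : ℕ):ℝ) = (n:ℝ)+1 := by push_cast; ring
      rw [hcast]
      have honed : (1:ℝ)/(L:ℝ) = (L:ℝ)⁻¹ := one_div _
      rw [honed]
      linarith [hstep, hS2, honed ▸ hS2]
  -- conclude
  have hmainL := main L (le_refl L)
  have hfy : 0 ≤ f y := hnonneg _ hy
  have hsum : (∑ j ∈ Finset.Icc 1 L, (1/(L:ℝ)) * (1 - 1/(L:ℝ)) ^ (L-j) *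
          ((1 - 1/(L:ℝ)) ^ (j-1) * f y
            + (inner ℝ (had (f' (x j)) (onesV d - x j)) (v j - y) : ℝ)))
      = (1 - 1/(L:ℝ)) ^ (L-1) * f y
        + (∑ j ∈ Finset.Icc 1 L, (1/(L:ℝ)) * (1 - 1/(L:ℝ)) ^ (L-j) *
            (inner ℝ (had (f' (x j)) (onesV d - x j)) (v j - y) : ℝ)) := by
    have e1 : ∀ j ∈ Finset.Icc 1 L,
        (1/(L:ℝ)) * (1 - 1/(L:ℝ)) ^ (L-j) *
          ((1 - 1/(L:ℝ)) ^ (j-1) * f y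
            + (inner ℝ (had (f' (x j)) (onesV d - x j)) (v j - y) : ℝ))
        = (1/(L:ℝ)) * ((1 - 1/(L:ℝ)) ^ (L-1) * f y)
          + (1/(L:ℝ)) * (1 - 1/(L:ℝ)) ^ (L-j) *
            (inner ℝ (had (f' (x j)) (onesV d - x j)) (v j - y) : ℝ) := by
      intro j hj
      have hj' := Finset.mem_Icc.1 hj
      have he : (L - j) + (j - 1) = L - 1 := by omega
      have : (1 - 1/(L:ℝ)) ^ (L-j) * (1 - 1/(L:ℝ)) ^ (j-1) = (1 - 1/(L:ℝ)) ^ (L-1) := by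
        rw [← pow_add, he]
      linear_combination (1/(L:ℝ)) * f y * this
    rw [Finset.sum_congr rfl e1, Finset.sum_add_distrib, Finset.sum_const]
    have hcard : (Finset.Icc 1 L).card = L := by
      rw [Nat.card_Icc]
      omega
    rw [hcard, nsmul_eq_mul]
    have hLne : (L:ℝ) ≠ 0 := ne_of_gt hLpos
    congr 1
    rw [one_div, ← mul_assoc, mul_inv_cancel₀ hLne, one_mul]
  rw [hsum] at hmainL
  have hexp : (1 / Real.exp 1) * f y ≤ (1 - 1/(L:ℝ)) ^ (L-1) * f y := by
    apply mul_le_mul_of_nonneg_right _ hfy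
    rw [one_div, ← Real.exp_neg]
    exact pow_ge_exp_neg_one L hL
  have hLE : (L:ℝ) * (β * R^2 / (2*(L:ℝ)^2)) = β * R^2 / (2*(L:ℝ)) := by
    field_simp
  rw [hLE] at hmainL
  linarith
end
end

section
/- Let d ≥ 1 and let f : ℝ^d → ℝ be continuous DR-submodular on X = [0,1]^d with f(x) ≥ 0 for all x ∈ X. Then for all x, y ∈ [0,1]^d: f(y + (1 − y) ⊙ x) ≥ (1 − ‖y‖_∞) · f(x). -/
open MeasureTheory Finset

noncomputable section

/-!
With `w = y ⊙ (1 - x)` the target point is `x + w`; put `g t = f (x + t • w)`. Applying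
DR-submodularity one coordinate at a time shows that `g` has decreasing increments on `[0, T]`,
`T = 1 / ‖y‖_∞`, the range on which `x + t • w` stays in the cube. On the grid `ℕ / n` this is
discrete concavity, so for `k / n ≤ T` the chord from `0` to `k / n` lies below `g`:
`k g(1) ≥ (k - n) g(0) + n g(k / n) ≥ (k - n) g(0)` by nonnegativity. Letting `n / k` decrease
to `‖y‖_∞` gives the bound; no continuity of `f` is needed.
-/

def AntitoneIncrementsOn (g : ℝ → ℝ) (s : Set ℝ) : Prop :=
  ∀ ⦃a b h : ℝ⦄, a ∈ s → b + h ∈ s → a ≤ b → 0 ≤ h → g (b + h) - g b ≤ g (a + h) - g a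

theorem mul_sub_le_mul_sub_of_antitoneOn_diff {G : ℕ → ℝ} {n k : ℕ}
    (hG : AntitoneOn (fun j => G (j + 1) - G j) (Set.Iio k)) (hnk : n ≤ k) :
    n * (G k - G 0) ≤ k * (G n - G 0) := by
  have hpairs : 0 ≤ ∑ i ∈ range n, ∑ j ∈ Ico n k,
      ((G (i + 1) - G i) - (G (j + 1) - G j)) :=
    sum_nonneg fun i hi => sum_nonneg fun j hj => by
      simp only [mem_range, mem_Ico] at hi hj
      exact sub_nonneg.2 (hG (by simp; omega) (by simpa using hj.2) (by omega))
  have hinner : ∀ i, ∑ j ∈ Ico n k, ((G (i + 1) - G i) - (G (j + 1) - G j)) =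
      (k - n : ℕ) * (G (i + 1) - G i) - (G k - G n) := fun i => by
    rw [sum_sub_distrib, sum_const, Nat.card_Ico, nsmul_eq_mul, sum_Ico_sub G hnk]
  rw [sum_congr rfl fun i _ => hinner i, sum_sub_distrib, ← mul_sum, sum_range_sub, sum_const,
    card_range, nsmul_eq_mul, Nat.cast_sub hnk] at hpairs
  linarith

theorem AntitoneIncrementsOn.chord_le {g : ℝ → ℝ} {n k : ℕ}
    (hg : AntitoneIncrementsOn g (Set.Icc 0 (k / n))) (hn : 0 < n) (hnk : n ≤ k) :
    n * (g (k / n) - g 0) ≤ k * (g 1 - g 0) := by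
  have hn' : (0 : ℝ) < n := Nat.cast_pos.2 hn
  have hdiff : AntitoneOn (fun j : ℕ => g ((j + 1 : ℕ) / n) - g (j / n)) (Set.Iio k) := by
    intro i hi j hj hij
    simp only [Set.mem_Iio] at hi hj
    have hij' : (i : ℝ) ≤ j := Nat.cast_le.2 hij
    have hjk : (j : ℝ) + 1 ≤ k := by exact_mod_cast hj
    have := hg (a := i / n) (b := j / n) (h := 1 / n)
      ⟨by positivity, by gcongr⟩
      ⟨by positivity, by rw [← add_div]; gcongr⟩ (by gcongr) (by positivity)
    simpa only [Nat.cast_succ, add_div] using this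
  simpa [hn'.ne'] using
    mul_sub_le_mul_sub_of_antitoneOn_diff (G := fun j : ℕ => g (j / n)) hdiff hnk

theorem one_sub_mul_le_of_forall_nat {M a c : ℝ} (hM0 : 0 ≤ M) (hM1 : M ≤ 1)
    (h : ∀ n k : ℕ, 0 < n → n ≤ k → k * M ≤ n → (k - n) * a ≤ k * c) :
    (1 - M) * a ≤ c := by
  have hc : 0 ≤ c := by simpa using h 1 1 one_pos le_rfl (by simpa using hM1)
  by_contra! hlt
  have ha : 0 < a := by nlinarith
  obtain ⟨q, hMq, hq⟩ := exists_rat_btwn (show M < 1 - c / a by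
    rw [lt_sub_iff_add_lt, ← lt_sub_iff_add_lt', div_lt_iff₀ ha]; linarith)
  have hq1 : (q : ℝ) < 1 := hq.trans_le (by simp only [sub_le_self_iff]; positivity)
  have hcq : c < (1 - q) * a := by
    rwa [lt_sub_comm, div_lt_iff₀ ha] at hq
  have hnum : 0 < q.num := Rat.num_pos.2 (by exact_mod_cast hM0.trans_lt hMq)
  have hden : (0 : ℝ) < q.den := by exact_mod_cast q.den_pos
  have hq_mul_den : (q : ℝ) * q.den = q.num.toNat := by
    rw [Rat.cast_def, div_mul_cancel₀ _ hden.ne']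
    exact_mod_cast (Int.toNat_of_nonneg hnum.le).symm
  have := h q.num.toNat q.den (by omega) (by rw [← Nat.cast_le (α := ℝ), ← hq_mul_den]; nlinarith)
    (by rw [← hq_mul_den]; nlinarith)
  rw [← hq_mul_den] at this
  nlinarith

section DRSubmodular

variable {d : ℕ}

def coordMask (w : EuclideanSpace ℝ (Fin d)) (s : Finset (Fin d)) : EuclideanSpace ℝ (Fin d) :=
  WithLp.toLp 2 (fun i => if i ∈ s then w i else 0)

theorem coordMask_apply (w : EuclideanSpace ℝ (Fin d)) (s : Finset (Fin d)) (i : Fin d) :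
    coordMask w s i = if i ∈ s then w i else 0 := rfl

theorem coordMask_empty (w : EuclideanSpace ℝ (Fin d)) : coordMask w ∅ = 0 := by
  ext i; simp [coordMask_apply]

theorem coordMask_univ (w : EuclideanSpace ℝ (Fin d)) : coordMask w univ = w := by
  ext i; simp [coordMask_apply]

theorem coordMask_insert (w : EuclideanSpace ℝ (Fin d)) {s : Finset (Fin d)} {j : Fin d}
    (hj : j ∉ s) :
    coordMask w (insert j s) = coordMask w s + w j • EuclideanSpace.single j (1 : ℝ) := by
  ext i
  rcases eq_or_ne i j with rfl | hij <;> simp [coordMask_apply, *]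

variable {f : EuclideanSpace ℝ (Fin d) → ℝ}

theorem DRSubmodularOn.sub_le_sub_of_le (hf : DRSubmodularOn d f) {u v w : EuclideanSpace ℝ (Fin d)}
    (hu : ∀ i, 0 ≤ u i) (huv : ∀ i, u i ≤ v i) (hw : ∀ i, 0 ≤ w i) (hvw : ∀ i, v i + w i ≤ 1) :
    f (v + w) - f v ≤ f (u + w) - f u := by
  classical
  have hmem : ∀ p s, (∀ i, 0 ≤ p i) → (∀ i, p i ≤ v i) → p + coordMask w s ∈ cube d := by
    intro p s hp hpv i
    have hmask : 0 ≤ coordMask w s i ∧ coordMask w s i ≤ w i := by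
      rw [coordMask_apply]; split_ifs <;> simp [hw i]
    simp only [PiLp.add_apply]
    constructor <;> linarith [hp i, hpv i, hvw i]
  have hv : ∀ i, 0 ≤ v i := fun i => (hu i).trans (huv i)
  suffices ∀ s, f (v + coordMask w s) - f v ≤ f (u + coordMask w s) - f u by
    simpa [coordMask_univ] using this univ
  intro s
  induction s using Finset.induction_on with
  | empty => simp [coordMask_empty]
  | insert j s hj ih =>
    have hinsert : ∀ p, p + coordMask w (insert j s) =
        p + coordMask w s + w j • EuclideanSpace.single j (1 : ℝ) := by
      intro p; rw [coordMask_insert w hj, add_assoc]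
    have hstep := hf _ _ (hmem u s hu huv) (hmem v s hv fun _ => le_rfl)
      (fun i => by simpa using huv i) j (w j) (hw j)
      (hinsert u ▸ hmem u _ hu huv) (hinsert v ▸ hmem v _ hv fun _ => le_rfl)
    rw [hinsert, hinsert]
    linarith

theorem DRSubmodularOn.antitoneIncrementsOn_line (hf : DRSubmodularOn d f)
    {x w : EuclideanSpace ℝ (Fin d)} {T : ℝ} (hx : x ∈ cube d) (hw : ∀ i, 0 ≤ w i)
    (hT : x + T • w ∈ cube d) :
    AntitoneIncrementsOn (fun t => f (x + t • w)) (Set.Icc 0 T) := by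
  intro a b h ha hbh hab hh
  simp only [add_smul, ← add_assoc]
  refine hf.sub_le_sub_of_le (fun i => ?_) (fun i => ?_) (fun i => ?_) (fun i => ?_)
  · simp only [PiLp.add_apply, PiLp.smul_apply, smul_eq_mul]
    nlinarith [(hx i).1, hw i, ha.1]
  · simp only [PiLp.add_apply, PiLp.smul_apply, smul_eq_mul]
    nlinarith [hw i]
  · simp only [PiLp.smul_apply, smul_eq_mul]
    nlinarith [hw i]
  · have := (hT i).2
    simp only [PiLp.add_apply, PiLp.smul_apply, smul_eq_mul] at this ⊢
    nlinarith [hw i, hbh.2]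

end DRSubmodular

theorem add_smul_had_mem_cube {d : ℕ} {x y : EuclideanSpace ℝ (Fin d)} {t : ℝ}
    (hx : x ∈ cube d) (hy : y ∈ cube d) (ht : 0 ≤ t) (hty : ∀ i, t * y i ≤ 1) :
    x + t • had y (onesV d - x) ∈ cube d := by
  intro i
  obtain ⟨hx0, hx1⟩ := hx i
  simp only [had, onesV, PiLp.add_apply, PiLp.smul_apply, PiLp.sub_apply, smul_eq_mul]
  constructor <;> nlinarith [(hy i).1, hty i]

theorem dr_submodular_shift_bound_general
    (d : ℕ)
    (f : EuclideanSpace ℝ (Fin d) → ℝ)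
    (hsub : DRSubmodularOn d f)
    (hnonneg : ∀ x ∈ cube d, 0 ≤ f x) :
    ∀ x ∈ cube d, ∀ y ∈ cube d,
      (1 - ⨆ i, |y i|) * f x ≤ f (y + had (onesV d - y) x) := by
  intro x hx y hy
  set M := ⨆ i, |y i|
  have hyM : ∀ i, y i ≤ M := fun i =>
    (le_abs_self _).trans (le_ciSup (Set.finite_range fun i => |y i|).bddAbove i)
  have hw : ∀ i, 0 ≤ had y (onesV d - x) i := fun i => by
    simp only [had, onesV, PiLp.sub_apply, PiLp.toLp_apply]
    exact mul_nonneg (hy i).1 (sub_nonneg.2 (hx i).2)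
  have hshift : y + had (onesV d - y) x = x + (1 : ℝ) • had y (onesV d - x) := by
    ext i
    simp only [had, onesV, PiLp.add_apply, PiLp.smul_apply, PiLp.sub_apply, smul_eq_mul]
    ring
  rw [hshift]
  refine one_sub_mul_le_of_forall_nat (Real.iSup_nonneg fun i => abs_nonneg _)
    (Real.iSup_le (fun i => abs_le.2 ⟨by linarith [(hy i).1], (hy i).2⟩) zero_le_one)
    fun n k hn hnk hkM => ?_
  have hn' : (0 : ℝ) < n := Nat.cast_pos.2 hn
  have hT : x + ((k : ℝ) / n) • had y (onesV d - x) ∈ cube d :=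
    add_smul_had_mem_cube hx hy (by positivity) fun i => by
      rw [div_mul_eq_mul_div, div_le_one hn']
      nlinarith [hyM i, (hy i).1]
  have hchord := (hsub.antitoneIncrementsOn_line hx hw hT).chord_le hn hnk
  have hfar := mul_nonneg hn'.le (hnonneg _ hT)
  simp only [zero_smul, add_zero] at hchord
  linarith

/-- Lemma 6 of Zhang et al.: for a continuous DR-submodular and
nonnegative `f` on `[0,1]^d` and any `x, y ∈ [0,1]^d`,
`f(y + (1 - y) ⊙ x) ≥ (1 - ‖y‖_∞) f(x)`. -/
theorem dr_submodular_shift_bound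
    (d : ℕ) (hd : 1 ≤ d)
    (f : EuclideanSpace ℝ (Fin d) → ℝ)
    (hsub : DRSubmodularOn d f)
    (hnonneg : ∀ x ∈ cube d, 0 ≤ f x) :
    ∀ x ∈ cube d, ∀ y ∈ cube d,
      (1 - ⨆ i, |y i|) * f x ≤ f (y + had (onesV d - y) x) :=
  dr_submodular_shift_bound_general d f hsub hnonneg
end
end
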